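/- arXiv:2502.05081 — 4 statements merged into one kernel-verified Lean document; each statement's English description precedes it below -/
import Mathlib

section
/- Fix h > 0 and p_k, p_h ∈ ℝ, and set Δ := p_k − ρ·p_h. If Δ ≤ 0, then the map c ↦ g(c; h, p_k, p_h) is strictly increasing on (0,∞). If Δ > 0, then with c* := (h^{γ(σ−1)}/Δ)^{1/σ}, the map c ↦ g(c; h, p_k, p_h) is increasing on (0, c*] and decreasing on [c*, ∞), and its maximum value is g(c*; h, p_k, p_h) = −(1 + 1/(σ−1))·(h^γ·Δ)^{1−1/σ}. -/
open MeasureTheory ProbabilityTheory Real Set Matrix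
open scoped ENNReal NNReal

noncomputable section

namespace HabitModel

/-- The function `g(c; h, p_k, p_h) = -c·(p_k - ρ·p_h) - (1/(σ-1))·(h^γ/c)^(σ-1)`. -/
def gFun (ρ σ γ : ℝ) (c h pk ph : ℝ) : ℝ :=
  -c * (pk - ρ * ph) - (σ - 1)⁻¹ * (h ^ γ / c) ^ (σ - 1)

/-- The maximized Hamiltonian term `G(k,h,p_k,p_h)`. -/
def GFun (ρ σ γ R : ℝ) (k h pk ph : ℝ) : ℝ :=
  if pk - ρ * ph ≤ h ^ (γ * (σ - 1)) * (R * k) ^ (-σ) then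
    -(R * k) * (pk - ρ * ph) - (σ - 1)⁻¹ * (h ^ γ / (R * k)) ^ (σ - 1)
  else
    -(1 + (σ - 1)⁻¹) * (h ^ γ * (pk - ρ * ph)) ^ (1 - 1 / σ)

/-- The maximum value Hamiltonian `H_max(k,h,p,Q)` (only the diagonal entries of `Q` enter). -/
def Hmax (B β₁ β₂ ρ σ γ R : ℝ) (k h : ℝ) (p : ℝ × ℝ)
    (Q : Matrix (Fin 2) (Fin 2) ℝ) : ℝ :=
  B * k * p.1 - ρ * h * p.2 + (1 / 2) * β₁ ^ 2 * k ^ 2 * Q 0 0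
    + (1 / 2) * β₂ ^ 2 * h ^ 2 * Q 1 1 + GFun ρ σ γ R k h p.1 p.2

/-- `F̃(Q, p, v, (k,h)) = -θ·v + H_max(k,h,p,Q)`. -/
def Ftilde (B β₁ β₂ ρ θ σ γ R : ℝ) (Q : Matrix (Fin 2) (Fin 2) ℝ)
    (p : ℝ × ℝ) (v : ℝ) (z : ℝ × ℝ) : ℝ :=
  -θ * v + Hmax B β₁ β₂ ρ σ γ R z.1 z.2 p Q

/-!
In the variables `Δ = p_k - ρ p_h` and `A = h^{γ(σ-1)}`, `g(c) = -Δ c - A c^{1-σ}/(σ-1)`,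
whose derivative `A c^{-σ} - Δ` is positive when `Δ ≤ 0` and, when `Δ > 0`, changes sign exactly
at the point `c*` with `c*^σ = A/Δ`. There `A c*^{1-σ} = Δ c*`, so
`g(c*) = -(1 + 1/(σ-1)) Δ c*`, and `Δ c* = (h^γ Δ)^{1-1/σ}`.
-/

def gProfile (Δ A σ c : ℝ) : ℝ := -c * Δ - (σ - 1)⁻¹ * A * c ^ (1 - σ)

def criticalPoint (Δ A σ : ℝ) : ℝ := (A / Δ) ^ (1 / σ)

section

variable {Δ A σ c : ℝ}

lemma gFun_eq_gProfile (ρ γ pk ph : ℝ) {h : ℝ} (hh : 0 < h) (hc : 0 < c) :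
    gFun ρ σ γ c h pk ph = gProfile (pk - ρ * ph) (h ^ (γ * (σ - 1))) σ c := by
  rw [gFun, gProfile, div_rpow (by positivity) hc.le, ← rpow_mul hh.le, div_eq_mul_inv,
    ← rpow_neg hc.le, neg_sub]
  ring

lemma hasDerivAt_gProfile (hσ : σ ≠ 1) (hc : 0 < c) :
    HasDerivAt (gProfile Δ A σ) (A * c ^ (-σ) - Δ) c := by
  have hpow : HasDerivAt (fun c : ℝ => c ^ (1 - σ)) ((1 - σ) * c ^ (1 - σ - 1)) c :=
    hasDerivAt_rpow_const (Or.inl hc.ne')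
  refine (((hasDerivAt_id c).neg.mul_const Δ).sub
    (hpow.const_mul ((σ - 1)⁻¹ * A))).congr_deriv ?_
  have : σ - 1 ≠ 0 := sub_ne_zero.2 hσ
  rw [show 1 - σ - 1 = -σ by ring]
  field_simp
  ring

lemma continuousOn_gProfile (hσ : σ ≠ 1) : ContinuousOn (gProfile Δ A σ) (Ioi 0) :=
  fun _ hc => (hasDerivAt_gProfile hσ hc).continuousAt.continuousWithinAt

lemma strictMonoOn_gProfile (hA : 0 < A) (hΔ : Δ ≤ 0) (hσ : σ ≠ 1) :
    StrictMonoOn (gProfile Δ A σ) (Ioi 0) := by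
  refine strictMonoOn_of_hasDerivWithinAt_pos (f' := fun c => A * c ^ (-σ) - Δ) (convex_Ioi 0)
    (continuousOn_gProfile hσ) (fun c hc => ?_) (fun c hc => ?_) <;> rw [interior_Ioi] at hc
  · exact (hasDerivAt_gProfile hσ hc).hasDerivWithinAt
  · have : 0 < A * c ^ (-σ) := mul_pos hA (rpow_pos_of_pos hc _)
    linarith

lemma le_mul_rpow_neg_iff_le_criticalPoint (hA : 0 ≤ A) (hΔ : 0 < Δ) (hσ : 0 < σ)
    (hc : 0 < c) :
    Δ ≤ A * c ^ (-σ) ↔ c ≤ criticalPoint Δ A σ := by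
  rw [criticalPoint, one_div, le_rpow_inv_iff_of_pos hc.le (div_nonneg hA hΔ.le) hσ,
    le_div_iff₀ hΔ, rpow_neg hc.le, ← div_eq_mul_inv, le_div_iff₀ (rpow_pos_of_pos hc σ),
    mul_comm]

lemma criticalPoint_pos (hA : 0 < A) (hΔ : 0 < Δ) : 0 < criticalPoint Δ A σ :=
  rpow_pos_of_pos (div_pos hA hΔ) _

lemma gProfile_criticalPoint (hA : 0 < A) (hΔ : 0 < Δ) (hσ : σ ≠ 0) :
    gProfile Δ A σ (criticalPoint Δ A σ) =
      -(1 + (σ - 1)⁻¹) * (criticalPoint Δ A σ * Δ) := by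
  have hcrit := criticalPoint_pos (σ := σ) hA hΔ
  have hpow : criticalPoint Δ A σ ^ σ = A / Δ := by
    rw [criticalPoint, ← rpow_mul (div_pos hA hΔ).le, one_div_mul_cancel hσ, rpow_one]
  rw [gProfile, rpow_sub hcrit, rpow_one, hpow]
  field_simp
  ring

lemma criticalPoint_rpow_sub_one_mul {a : ℝ} (ha : 0 ≤ a) (hΔ : 0 < Δ) (hσ : σ ≠ 0) :
    criticalPoint Δ (a ^ (σ - 1)) σ * Δ = (a * Δ) ^ (1 - 1 / σ) := by
  rw [criticalPoint, div_rpow (rpow_nonneg ha _) hΔ.le, ← rpow_mul ha, mul_rpow ha hΔ.le,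
    rpow_sub hΔ, rpow_one, show (σ - 1) * (1 / σ) = 1 - 1 / σ by field_simp]
  ring

variable (hA : 0 < A) (hΔ : 0 < Δ) (hσ₀ : 0 < σ) (hσ : σ ≠ 1)
include hA hΔ hσ₀ hσ

lemma monotoneOn_gProfile : MonotoneOn (gProfile Δ A σ) (Ioc 0 (criticalPoint Δ A σ)) := by
  refine monotoneOn_of_hasDerivWithinAt_nonneg (f' := fun c => A * c ^ (-σ) - Δ) (convex_Ioc _ _)
    ((continuousOn_gProfile hσ).mono fun _ hc => hc.1) (fun c hc => ?_) (fun c hc => ?_) <;>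
    rw [interior_Ioc] at hc
  · exact (hasDerivAt_gProfile hσ hc.1).hasDerivWithinAt
  · rw [sub_nonneg, le_mul_rpow_neg_iff_le_criticalPoint hA.le hΔ hσ₀ hc.1]
    exact hc.2.le

lemma antitoneOn_gProfile : AntitoneOn (gProfile Δ A σ) (Ici (criticalPoint Δ A σ)) := by
  have hcrit := criticalPoint_pos (σ := σ) hA hΔ
  refine antitoneOn_of_hasDerivWithinAt_nonpos (f' := fun c => A * c ^ (-σ) - Δ) (convex_Ici _)
    ((continuousOn_gProfile hσ).mono fun _ hc => hcrit.trans_le hc) (fun c hc => ?_)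
    (fun c hc => ?_) <;> rw [interior_Ici] at hc
  · exact (hasDerivAt_gProfile hσ (hcrit.trans hc)).hasDerivWithinAt
  · rw [sub_nonpos]
    by_contra! hlt
    exact hc.not_ge
      ((le_mul_rpow_neg_iff_le_criticalPoint hA.le hΔ hσ₀ (hcrit.trans hc)).1 hlt.le)

lemma isMaxOn_gProfile : IsMaxOn (gProfile Δ A σ) (Ioi 0) (criticalPoint Δ A σ) := by
  have hcrit := criticalPoint_pos (σ := σ) hA hΔ
  intro c (hc : 0 < c)
  rcases le_total c (criticalPoint Δ A σ) with hle | hle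
  · exact monotoneOn_gProfile hA hΔ hσ₀ hσ ⟨hc, hle⟩ ⟨hcrit, le_rfl⟩ hle
  · exact antitoneOn_gProfile hA hΔ hσ₀ hσ self_mem_Ici hle hle

end

theorem gFun_monotonicity_general (ρ σ γ : ℝ) (hσ : 1 < σ) (h pk ph : ℝ) (hh : 0 < h) :
    (pk - ρ * ph ≤ 0 → StrictMonoOn (fun c => gFun ρ σ γ c h pk ph) (Set.Ioi 0)) ∧
    (0 < pk - ρ * ph →
      MonotoneOn (fun c => gFun ρ σ γ c h pk ph)
        (Set.Ioc 0 ((h ^ (γ * (σ - 1)) / (pk - ρ * ph)) ^ (1 / σ))) ∧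
      AntitoneOn (fun c => gFun ρ σ γ c h pk ph)
        (Set.Ici ((h ^ (γ * (σ - 1)) / (pk - ρ * ph)) ^ (1 / σ))) ∧
      (∀ c ∈ Set.Ioi (0:ℝ), gFun ρ σ γ c h pk ph ≤
        gFun ρ σ γ ((h ^ (γ * (σ - 1)) / (pk - ρ * ph)) ^ (1 / σ)) h pk ph) ∧
      gFun ρ σ γ ((h ^ (γ * (σ - 1)) / (pk - ρ * ph)) ^ (1 / σ)) h pk ph =
        -(1 + (σ - 1)⁻¹) * (h ^ γ * (pk - ρ * ph)) ^ (1 - 1 / σ)) := by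
  have hσ₀ : 0 < σ := by linarith
  have hA : 0 < h ^ (γ * (σ - 1)) := rpow_pos_of_pos hh _
  have hg : EqOn (gProfile (pk - ρ * ph) (h ^ (γ * (σ - 1))) σ)
      (fun c => gFun ρ σ γ c h pk ph) (Ioi 0) := fun c hc => (gFun_eq_gProfile ρ γ pk ph hh hc).symm
  refine ⟨fun hΔ => (strictMonoOn_gProfile hA hΔ hσ.ne').congr hg, fun hΔ => ?_⟩
  have hcrit := criticalPoint_pos (σ := σ) hA hΔ
  refine ⟨(monotoneOn_gProfile hA hΔ hσ₀ hσ.ne').congr (hg.mono fun _ hc => hc.1),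
    (antitoneOn_gProfile hA hΔ hσ₀ hσ.ne').congr (hg.mono fun _ hc => hcrit.trans_le hc),
    fun c hc => ?_, ?_⟩
  · exact (hg hc).symm.trans_le ((isMaxOn_gProfile hA hΔ hσ₀ hσ.ne' hc).trans_eq (hg hcrit))
  · refine (hg hcrit).symm.trans ?_
    rw [gProfile_criticalPoint hA hΔ hσ₀.ne', rpow_mul hh.le,
      criticalPoint_rpow_sub_one_mul (rpow_nonneg hh.le γ) hΔ hσ₀.ne']

/-- Monotonicity of `c ↦ g(c; h, p_k, p_h)`: strictly increasing on `(0,∞)` if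
`Δ = p_k - ρ·p_h ≤ 0`; if `Δ > 0`, increasing on `(0,c*]` and decreasing on `[c*,∞)` with
`c* = (h^{γ(σ-1)}/Δ)^{1/σ}`, where the maximum value is
`g(c*) = -(1 + 1/(σ-1))·(h^γ·Δ)^{1-1/σ}`. -/
theorem gFun_monotonicity (ρ σ γ : ℝ) (hρ₀ : 0 < ρ) (hρ₁ : ρ < 1) (hσ : 1 < σ)
    (hγ₀ : 0 ≤ γ) (hγ₁ : γ < 1) (h pk ph : ℝ) (hh : 0 < h) :
    (pk - ρ * ph ≤ 0 → StrictMonoOn (fun c => gFun ρ σ γ c h pk ph) (Set.Ioi 0)) ∧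
    (0 < pk - ρ * ph →
      MonotoneOn (fun c => gFun ρ σ γ c h pk ph)
        (Set.Ioc 0 ((h ^ (γ * (σ - 1)) / (pk - ρ * ph)) ^ (1 / σ))) ∧
      AntitoneOn (fun c => gFun ρ σ γ c h pk ph)
        (Set.Ici ((h ^ (γ * (σ - 1)) / (pk - ρ * ph)) ^ (1 / σ))) ∧
      (∀ c ∈ Set.Ioi (0:ℝ), gFun ρ σ γ c h pk ph ≤
        gFun ρ σ γ ((h ^ (γ * (σ - 1)) / (pk - ρ * ph)) ^ (1 / σ)) h pk ph) ∧
      gFun ρ σ γ ((h ^ (γ * (σ - 1)) / (pk - ρ * ph)) ^ (1 / σ)) h pk ph =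
        -(1 + (σ - 1)⁻¹) * (h ^ γ * (pk - ρ * ph)) ^ (1 - 1 / σ)) :=
  gFun_monotonicity_general ρ σ γ hσ h pk ph hh

end HabitModel
end
end

section
/- For every (k,h) ∈ (0,∞)² and every p_k, p_h ∈ ℝ, the supremum of g(c; h, p_k, p_h) over c ∈ (0, R·k] equals G(k,h,p_k,p_h), and it is attained: at c = R·k when p_k − ρ·p_h ≤ h^{γ(σ−1)}·(R·k)^{−σ}, and at c = (h^{γ(σ−1)}/(p_k − ρ·p_h))^{1/σ} ∈ (0, R·k) when p_k − ρ·p_h > h^{γ(σ−1)}·(R·k)^{−σ}. -/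
open MeasureTheory ProbabilityTheory Real Set Matrix
open scoped ENNReal NNReal

noncomputable section

namespace HabitModel

/-! With `a = p_k - ρ·p_h` and `A = h^{γ(σ-1)}`, `g(c) = -a·c - A·c^{1-σ}/(σ-1)` is concave on
`(0, ∞)` with derivative `A·c^{-σ} - a`: the tangent-line bound comes from Bernoulli's inequality
`t^q ≥ 1 + q·(t - 1)` for `q ≤ 0`, itself `exp x ≥ 1 + x` combined with `log t ≤ t - 1`.
So a point of `(0, R·k]` is a maximiser as soon as the derivative there points towards it:
`c = R·k` when the derivative is still nonnegative at `R·k`, and otherwise the critical point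
`c = (A/a)^{1/σ}`, which then lies in `(0, R·k)` and where `a·c = (h^γ·a)^{1-1/σ}`. -/

theorem one_add_mul_sub_one_le_rpow_of_nonpos {q t : ℝ} (hq : q ≤ 0) (ht : 0 < t) :
    1 + q * (t - 1) ≤ t ^ q := by
  have hlog : q * (t - 1) ≤ q * Real.log t :=
    mul_le_mul_of_nonpos_left (Real.log_le_sub_one_of_pos ht) hq
  calc 1 + q * (t - 1) ≤ Real.log t * q + 1 := by linarith
    _ ≤ Real.exp (Real.log t * q) := Real.add_one_le_exp _
    _ = t ^ q := (Real.rpow_def_of_pos ht q).symm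

theorem rpow_add_mul_sub_le_rpow_of_nonpos {q c c₀ : ℝ} (hq : q ≤ 0) (hc : 0 < c) (hc₀ : 0 < c₀) :
    c₀ ^ q + q * c₀ ^ (q - 1) * (c - c₀) ≤ c ^ q := by
  have hpow : 0 < c₀ ^ q := Real.rpow_pos_of_pos hc₀ q
  have hbern := one_add_mul_sub_one_le_rpow_of_nonpos hq (div_pos hc hc₀)
  rw [Real.div_rpow hc.le hc₀.le, le_div_iff₀ hpow] at hbern
  rw [Real.rpow_sub_one hc₀.ne']
  calc c₀ ^ q + q * (c₀ ^ q / c₀) * (c - c₀) = (1 + q * (c / c₀ - 1)) * c₀ ^ q := by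
        field_simp
    _ ≤ c ^ q := hbern

theorem gFun_eq_mul_rpow {ρ σ γ c h : ℝ} (pk ph : ℝ) (hh : 0 ≤ h) (hc : 0 ≤ c) :
    gFun ρ σ γ c h pk ph
      = -c * (pk - ρ * ph) - (σ - 1)⁻¹ * (h ^ (γ * (σ - 1)) * c ^ (1 - σ)) := by
  rw [gFun, Real.div_rpow (Real.rpow_nonneg hh γ) hc, Real.rpow_mul hh, div_eq_mul_inv,
    ← Real.rpow_neg hc, neg_sub]

theorem gFun_le_add_mul_sub {ρ σ γ c c₀ h : ℝ} (pk ph : ℝ) (hσ : 1 < σ) (hh : 0 ≤ h)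
    (hc : 0 < c) (hc₀ : 0 < c₀) :
    gFun ρ σ γ c h pk ph ≤ gFun ρ σ γ c₀ h pk ph
      + (h ^ (γ * (σ - 1)) * c₀ ^ (-σ) - (pk - ρ * ph)) * (c - c₀) := by
  have hA : 0 ≤ (σ - 1)⁻¹ * h ^ (γ * (σ - 1)) :=
    mul_nonneg (inv_nonneg.2 (by linarith)) (Real.rpow_nonneg hh _)
  have htangent := mul_le_mul_of_nonneg_left
    (rpow_add_mul_sub_le_rpow_of_nonpos (by linarith : 1 - σ ≤ 0) hc hc₀) hA
  rw [gFun_eq_mul_rpow pk ph hh hc.le, gFun_eq_mul_rpow pk ph hh hc₀.le]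
  have hσ₁ : σ - 1 ≠ 0 := by linarith
  rw [show 1 - σ - 1 = -σ by ring] at htangent
  have hinv : (σ - 1)⁻¹ * (1 - σ) = -1 := by field_simp; ring
  linear_combination htangent - h ^ (γ * (σ - 1)) * c₀ ^ (-σ) * (c - c₀) * hinv

theorem isGreatest_image_gFun {ρ σ γ h m c₀ : ℝ} (pk ph : ℝ) (hσ : 1 < σ) (hh : 0 ≤ h)
    (hc₀ : c₀ ∈ Ioc 0 m)
    (hopt : ∀ c ∈ Ioc 0 m, (h ^ (γ * (σ - 1)) * c₀ ^ (-σ) - (pk - ρ * ph)) * (c - c₀) ≤ 0) :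
    IsGreatest ((fun c => gFun ρ σ γ c h pk ph) '' Ioc 0 m) (gFun ρ σ γ c₀ h pk ph) := by
  refine ⟨mem_image_of_mem _ hc₀, ?_⟩
  rintro _ ⟨c, hc, rfl⟩
  linarith [gFun_le_add_mul_sub (ρ := ρ) (γ := γ) pk ph hσ hh hc.1 hc₀.1, hopt c hc]

theorem mul_rpow_neg_div_rpow_one_div {A a σ : ℝ} (hA : 0 < A) (ha : 0 < a) (hσ : σ ≠ 0) :
    A * ((A / a) ^ (1 / σ)) ^ (-σ) = a := by
  rw [Real.rpow_neg (Real.rpow_nonneg (div_pos hA ha).le _), one_div,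
    Real.rpow_inv_rpow (div_pos hA ha).le hσ]
  field_simp

theorem rpow_one_div_lt_of_mul_rpow_neg_lt {A a m σ : ℝ} (hA : 0 ≤ A) (ha : 0 < a) (hm : 0 < m)
    (hσ : 0 < σ) (hlt : A * m ^ (-σ) < a) :
    (A / a) ^ (1 / σ) < m := by
  rw [Real.rpow_neg hm.le, ← div_eq_mul_inv, div_lt_iff₀ (Real.rpow_pos_of_pos hm σ)] at hlt
  rw [one_div, Real.rpow_inv_lt_iff_of_pos (div_nonneg hA ha.le) hm.le hσ, div_lt_iff₀ ha]
  linarith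

theorem mul_rpow_sub_one_div_rpow_one_div {a b σ : ℝ} (ha : 0 < a) (hb : 0 ≤ b) (hσ : σ ≠ 0) :
    a * (b ^ (σ - 1) / a) ^ (1 / σ) = (b * a) ^ (1 - 1 / σ) := by
  rw [Real.div_rpow (Real.rpow_nonneg hb _) ha.le, ← Real.rpow_mul hb,
    Real.mul_rpow hb ha.le, Real.rpow_sub ha, Real.rpow_one,
    show (σ - 1) * (1 / σ) = 1 - 1 / σ by field_simp]
  ring

theorem gFun_at_criticalPoint {ρ σ γ h pk ph : ℝ} (hσ : 1 < σ) (hh : 0 < h)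
    (ha : 0 < pk - ρ * ph) :
    gFun ρ σ γ ((h ^ (γ * (σ - 1)) / (pk - ρ * ph)) ^ (1 / σ)) h pk ph
      = -(1 + (σ - 1)⁻¹) * (h ^ γ * (pk - ρ * ph)) ^ (1 - 1 / σ) := by
  set a := pk - ρ * ph
  set c := (h ^ (γ * (σ - 1)) / a) ^ (1 / σ) with hc_def
  have hc : 0 < c := Real.rpow_pos_of_pos (div_pos (Real.rpow_pos_of_pos hh _) ha) _
  have hcrit : h ^ (γ * (σ - 1)) * c ^ (-σ) = a :=
    mul_rpow_neg_div_rpow_one_div (Real.rpow_pos_of_pos hh _) ha (by linarith)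
  have hvalue : a * c = (h ^ γ * a) ^ (1 - 1 / σ) := by
    rw [hc_def, Real.rpow_mul hh.le]
    exact mul_rpow_sub_one_div_rpow_one_div ha (Real.rpow_nonneg hh.le γ) (by linarith)
  rw [gFun_eq_mul_rpow pk ph hh.le hc.le, show 1 - σ = -σ + 1 by ring, Real.rpow_add hc,
    Real.rpow_one, ← hvalue]
  linear_combination (-(σ - 1)⁻¹ * c) * hcrit

theorem gFun_sup_eq_GFun_general (ρ σ γ R : ℝ) (hσ : 1 < σ)
    (hR : 0 < R) (k h pk ph : ℝ) (hk : 0 < k) (hh : 0 < h) :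
    IsGreatest ((fun c => gFun ρ σ γ c h pk ph) '' Set.Ioc 0 (R * k))
      (GFun ρ σ γ R k h pk ph) ∧
    (pk - ρ * ph ≤ h ^ (γ * (σ - 1)) * (R * k) ^ (-σ) →
      gFun ρ σ γ (R * k) h pk ph = GFun ρ σ γ R k h pk ph) ∧
    (h ^ (γ * (σ - 1)) * (R * k) ^ (-σ) < pk - ρ * ph →
      (h ^ (γ * (σ - 1)) / (pk - ρ * ph)) ^ (1 / σ) ∈ Set.Ioo 0 (R * k) ∧
      gFun ρ σ γ ((h ^ (γ * (σ - 1)) / (pk - ρ * ph)) ^ (1 / σ)) h pk ph =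
        GFun ρ σ γ R k h pk ph) := by
  have hRk : 0 < R * k := mul_pos hR hk
  have hA : 0 < h ^ (γ * (σ - 1)) := Real.rpow_pos_of_pos hh _
  by_cases hle : pk - ρ * ph ≤ h ^ (γ * (σ - 1)) * (R * k) ^ (-σ)
  · have hG : gFun ρ σ γ (R * k) h pk ph = GFun ρ σ γ R k h pk ph := by
      rw [GFun, if_pos hle, gFun]
    refine ⟨hG ▸ isGreatest_image_gFun pk ph hσ hh.le ⟨hRk, le_rfl⟩ fun c hc => ?_,
      fun _ => hG, fun hlt => absurd hle (not_le.2 hlt)⟩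
    exact mul_nonpos_of_nonneg_of_nonpos (sub_nonneg.2 hle) (sub_nonpos.2 hc.2)
  · rw [not_le] at hle
    have ha : 0 < pk - ρ * ph := (mul_pos hA (Real.rpow_pos_of_pos hRk _)).trans hle
    set c := (h ^ (γ * (σ - 1)) / (pk - ρ * ph)) ^ (1 / σ)
    have hc : c ∈ Ioo 0 (R * k) := ⟨Real.rpow_pos_of_pos (div_pos hA ha) _,
      rpow_one_div_lt_of_mul_rpow_neg_lt hA.le ha hRk (by linarith) hle⟩
    have hcrit : h ^ (γ * (σ - 1)) * c ^ (-σ) = pk - ρ * ph :=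
      mul_rpow_neg_div_rpow_one_div hA ha (by linarith)
    have hG : gFun ρ σ γ c h pk ph = GFun ρ σ γ R k h pk ph := by
      rw [GFun, if_neg (not_le.2 hle), gFun_at_criticalPoint hσ hh ha]
    refine ⟨hG ▸ isGreatest_image_gFun pk ph hσ hh.le (Ioo_subset_Ioc_self hc) fun _ _ => ?_,
      fun hle' => absurd hle' (not_le.2 hle), fun _ => ⟨hc, hG⟩⟩
    rw [hcrit, sub_self, zero_mul]

/-- The supremum of `g(·; h, p_k, p_h)` over `(0, R·k]` equals `G(k,h,p_k,p_h)` and is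
attained: at `c = R·k` in the first regime, and at `c = (h^{γ(σ-1)}/(p_k-ρ·p_h))^{1/σ} ∈
(0, R·k)` in the second regime. -/
theorem gFun_sup_eq_GFun (ρ σ γ R : ℝ) (hρ₀ : 0 < ρ) (hρ₁ : ρ < 1) (hσ : 1 < σ)
    (hγ₀ : 0 ≤ γ) (hγ₁ : γ < 1) (hR : 0 < R) (k h pk ph : ℝ) (hk : 0 < k) (hh : 0 < h) :
    IsGreatest ((fun c => gFun ρ σ γ c h pk ph) '' Set.Ioc 0 (R * k))
      (GFun ρ σ γ R k h pk ph) ∧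
    (pk - ρ * ph ≤ h ^ (γ * (σ - 1)) * (R * k) ^ (-σ) →
      gFun ρ σ γ (R * k) h pk ph = GFun ρ σ γ R k h pk ph) ∧
    (h ^ (γ * (σ - 1)) * (R * k) ^ (-σ) < pk - ρ * ph →
      (h ^ (γ * (σ - 1)) / (pk - ρ * ph)) ^ (1 / σ) ∈ Set.Ioo 0 (R * k) ∧
      gFun ρ σ γ ((h ^ (γ * (σ - 1)) / (pk - ρ * ph)) ^ (1 / σ)) h pk ph =
        GFun ρ σ γ R k h pk ph) :=
  gFun_sup_eq_GFun_general ρ σ γ R hσ hR k h pk ph hk hh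

end HabitModel
end
end

section
/- Let D ⊂ ℝ² be open and bounded with closure contained in (0,∞)². Then there exists a constant C̄ > 0 such that for every real symmetric 2×2 matrix Q, every (k,h) in the closure of D, every p = (p_k,p_h), p̄ = (p̄_k,p̄_h) ∈ ℝ² and every v, v̄ ∈ ℝ: |F̃(Q, p, v, (k,h)) − F̃(Q, p̄, v̄, (k,h))| ≤ C̄·(|p_k − p̄_k| + |p_h − p̄_h| + |v − v̄|). -/
open MeasureTheory ProbabilityTheory Real Set Matrix
open scoped ENNReal NNReal

/-!
Only the term `G` is nonlinear in `(p, v)`, and it depends on `p` only through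
`x = p_k - ρ p_h`. As a function of `x` it is affine with slope `-R k` up to the threshold
`T = h^{γ(σ-1)} (R k)^{-σ}` and a concave power `-(σ/(σ-1)) (h^γ x)^{1-1/σ}` beyond it; the two
pieces agree at `T`, and the derivative of the power piece is at most `R k` in absolute value
on `[T, ∞)`. Hence `G` is `R k`-Lipschitz in `x`, and on the bounded set `closure D` every
coefficient of the remaining, affine, part of `F̃` is bounded.
-/

noncomputable section

namespace HabitModel

theorem _root_.lipschitzWith_of_lipschitzOnWith_Iic_Ici {α : Type*} [PseudoMetricSpace α]
    {f : ℝ → α} {K : ℝ≥0} {T : ℝ} (hle : LipschitzOnWith K f (Iic T))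
    (hge : LipschitzOnWith K f (Ici T)) : LipschitzWith K f := by
  have key : ∀ x y, x ≤ y → dist (f x) (f y) ≤ K * dist x y := by
    intro x y hxy
    rcases le_total y T with hyT | hTy
    · exact hle.dist_le_mul x (hxy.trans hyT) y hyT
    rcases le_total x T with hxT | hTx
    · calc dist (f x) (f y) ≤ dist (f x) (f T) + dist (f T) (f y) := dist_triangle _ _ _
        _ ≤ K * dist x T + K * dist T y :=
          add_le_add (hle.dist_le_mul x hxT T self_mem_Iic) (hge.dist_le_mul T self_mem_Ici y hTy)
        _ = K * dist x y := by
          rw [Real.dist_eq, Real.dist_eq, Real.dist_eq, abs_of_nonpos (by linarith),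
            abs_of_nonpos (by linarith), abs_of_nonpos (by linarith)]
          ring
    · exact hge.dist_le_mul x hTx y hTy
  refine LipschitzWith.of_dist_le_mul fun x y => ?_
  rcases le_total x y with hxy | hyx
  · exact key x y hxy
  · rw [dist_comm, dist_comm x]
    exact key y x hyx

variable {σ a c : ℝ}

def threshold (σ a c : ℝ) : ℝ :=
  a ^ (σ - 1) * c ^ (-σ)

def maxProfile (σ a c x : ℝ) : ℝ :=
  if x ≤ threshold σ a c then -c * x - (σ - 1)⁻¹ * (a / c) ^ (σ - 1)
  else -(1 + (σ - 1)⁻¹) * (a * x) ^ (1 - 1 / σ)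

theorem GFun_eq_maxProfile {ρ γ R k h : ℝ} (hh : 0 ≤ h) (pk ph : ℝ) :
    GFun ρ σ γ R k h pk ph = maxProfile σ (h ^ γ) (R * k) (pk - ρ * ph) := by
  rw [GFun, maxProfile, threshold, ← Real.rpow_mul hh]

theorem threshold_pos (ha : 0 < a) (hc : 0 < c) : 0 < threshold σ a c := by
  unfold threshold
  positivity

theorem mul_threshold_left (ha : 0 < a) (hc : 0 < c) :
    a * threshold σ a c = (a / c) ^ σ := by
  rw [threshold, Real.rpow_sub_one ha.ne', Real.div_rpow ha.le hc.le, Real.rpow_neg hc.le]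
  field_simp

theorem mul_threshold_right (ha : 0 < a) (hc : 0 < c) :
    c * threshold σ a c = (a / c) ^ (σ - 1) := by
  rw [threshold, Real.rpow_sub_one ha.ne', Real.rpow_sub_one (div_pos ha hc).ne',
    Real.div_rpow ha.le hc.le, Real.rpow_neg hc.le]
  field_simp

theorem lipschitzOnWith_maxProfile_Iic (hc : 0 < c) :
    LipschitzOnWith (Real.toNNReal c) (maxProfile σ a c) (Iic (threshold σ a c)) := by
  refine LipschitzOnWith.of_dist_le_mul fun x hx y hy => ?_
  rw [maxProfile, maxProfile, if_pos (mem_Iic.1 hx), if_pos (mem_Iic.1 hy),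
    Real.coe_toNNReal _ hc.le, Real.dist_eq, Real.dist_eq,
    show -c * x - (σ - 1)⁻¹ * (a / c) ^ (σ - 1) - (-c * y - (σ - 1)⁻¹ * (a / c) ^ (σ - 1))
      = -(c * (x - y)) by ring, abs_neg, abs_mul, abs_of_pos hc]

/-- At the threshold itself the `if` picks the affine piece, which agrees with the power piece
there. -/
theorem eqOn_maxProfile_Ici (hσ : 1 < σ) (ha : 0 < a) (hc : 0 < c) :
    EqOn (maxProfile σ a c) (fun x => -(1 + (σ - 1)⁻¹) * (a * x) ^ (1 - 1 / σ))
      (Ici (threshold σ a c)) := by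
  intro x hx
  rcases (mem_Ici.1 hx).eq_or_lt with rfl | hlt
  · have hexp : σ * (1 - 1 / σ) = σ - 1 := by field_simp
    beta_reduce
    rw [maxProfile, if_pos le_rfl, mul_threshold_left ha hc,
      ← Real.rpow_mul (div_pos ha hc).le, hexp, neg_mul c, mul_threshold_right ha hc]
    ring
  · rw [maxProfile, if_neg (not_le.2 hlt)]

theorem lipschitzOnWith_maxProfile_Ici (hσ : 1 < σ) (ha : 0 < a) (hc : 0 < c) :
    LipschitzOnWith (Real.toNNReal c) (maxProfile σ a c) (Ici (threshold σ a c)) := by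
  set T := threshold σ a c
  have hT : 0 < T := threshold_pos ha hc
  have hderiv : ∀ x ∈ Ici T, HasDerivWithinAt
      (fun x => -(1 + (σ - 1)⁻¹) * (a * x) ^ (1 - 1 / σ)) (-(a * (a * x) ^ (-σ⁻¹))) (Ici T) x := by
    intro x hx
    have hax : a * x ≠ 0 := (mul_pos ha (hT.trans_le hx)).ne'
    have := (((hasDerivAt_id x).const_mul a).rpow_const (p := 1 - 1 / σ) (Or.inl hax)).const_mul
      (-(1 + (σ - 1)⁻¹))
    refine this.hasDerivWithinAt.congr_deriv ?_
    have hσ₀ : σ ≠ 0 := by linarith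
    have hσ₁ : σ - 1 ≠ 0 := by linarith
    rw [show (1 : ℝ) - 1 / σ - 1 = -σ⁻¹ by ring, id]
    field_simp
    ring
  have hbound : ∀ x ∈ Ici T, ‖-(a * (a * x) ^ (-σ⁻¹))‖₊ ≤ Real.toNNReal c := by
    intro x hx
    have hdecay : (a * x) ^ (-σ⁻¹) ≤ (a * T) ^ (-σ⁻¹) :=
      Real.rpow_le_rpow_of_nonpos (mul_pos ha hT) (mul_le_mul_of_nonneg_left hx ha.le)
        (by simp only [neg_nonpos, inv_nonneg]; linarith)
    have hslope_at_T : a * (a * T) ^ (-σ⁻¹) = c := by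
      rw [mul_threshold_left ha hc, ← Real.rpow_mul (div_pos ha hc).le,
        show σ * -σ⁻¹ = -1 by field_simp, Real.rpow_neg_one, inv_div]
      field_simp
    rw [← NNReal.coe_le_coe, coe_nnnorm, Real.coe_toNNReal _ hc.le, norm_neg,
      Real.norm_of_nonneg (mul_nonneg ha.le (Real.rpow_nonneg (mul_pos ha (hT.trans_le hx)).le _)),
      ← hslope_at_T]
    exact mul_le_mul_of_nonneg_left hdecay ha.le
  have hpower := (convex_Ici T).lipschitzOnWith_of_nnnorm_hasDerivWithin_le hderiv hbound
  intro x hx y hy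
  rw [eqOn_maxProfile_Ici hσ ha hc hx, eqOn_maxProfile_Ici hσ ha hc hy]
  exact hpower hx hy

theorem lipschitzWith_maxProfile (hσ : 1 < σ) (ha : 0 < a) (hc : 0 < c) :
    LipschitzWith (Real.toNNReal c) (maxProfile σ a c) :=
  lipschitzWith_of_lipschitzOnWith_Iic_Ici (lipschitzOnWith_maxProfile_Iic hc)
    (lipschitzOnWith_maxProfile_Ici hσ ha hc)

theorem abs_GFun_sub_le {ρ γ R k h : ℝ} (hσ : 1 < σ) (hR : 0 < R) (hk : 0 < k) (hh : 0 < h)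
    (pk ph pk' ph' : ℝ) :
    |GFun ρ σ γ R k h pk ph - GFun ρ σ γ R k h pk' ph'| ≤
      R * k * (|pk - pk'| + |ρ| * |ph - ph'|) := by
  have hRk : 0 < R * k := mul_pos hR hk
  have hlip := (lipschitzWith_maxProfile hσ (Real.rpow_pos_of_pos hh γ) hRk).dist_le_mul
    (pk - ρ * ph) (pk' - ρ * ph')
  rw [Real.dist_eq, Real.dist_eq, Real.coe_toNNReal _ hRk.le] at hlip
  rw [GFun_eq_maxProfile hh.le, GFun_eq_maxProfile hh.le]
  refine hlip.trans (mul_le_mul_of_nonneg_left ?_ hRk.le)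
  calc |pk - ρ * ph - (pk' - ρ * ph')| = |(pk - pk') - ρ * (ph - ph')| := by ring_nf
    _ ≤ |pk - pk'| + |ρ| * |ph - ph'| := by rw [← abs_mul]; exact abs_sub _ _

theorem Ftilde_sub {B β₁ β₂ ρ θ γ R : ℝ} (Q : Matrix (Fin 2) (Fin 2) ℝ) (z : ℝ × ℝ)
    (pk ph pk' ph' v v' : ℝ) :
    Ftilde B β₁ β₂ ρ θ σ γ R Q (pk, ph) v z - Ftilde B β₁ β₂ ρ θ σ γ R Q (pk', ph') v' z
      = -θ * (v - v') + B * z.1 * (pk - pk') - ρ * z.2 * (ph - ph')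
        + (GFun ρ σ γ R z.1 z.2 pk ph - GFun ρ σ γ R z.1 z.2 pk' ph') := by
  simp only [Ftilde, Hmax]
  ring

theorem abs_Ftilde_sub_le {B β₁ β₂ ρ θ γ R : ℝ} (hσ : 1 < σ) (hR : 0 < R) {z : ℝ × ℝ}
    (hk : 0 < z.1) (hh : 0 < z.2) (Q : Matrix (Fin 2) (Fin 2) ℝ) (pk ph pk' ph' v v' : ℝ) :
    |Ftilde B β₁ β₂ ρ θ σ γ R Q (pk, ph) v z - Ftilde B β₁ β₂ ρ θ σ γ R Q (pk', ph') v' z|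
      ≤ |θ| * |v - v'| + (|B| + R) * z.1 * |pk - pk'|
        + (|ρ| * z.2 + R * z.1 * |ρ|) * |ph - ph'| := by
  have hG := abs_le.1 (abs_GFun_sub_le (ρ := ρ) (γ := γ) hσ hR hk hh pk ph pk' ph')
  have hθv := abs_le.1 (abs_mul θ (v - v')).le
  have hBk := abs_le.1 (abs_mul (B * z.1) (pk - pk')).le
  have hρh := abs_le.1 (abs_mul (ρ * z.2) (ph - ph')).le
  rw [abs_mul B, abs_of_pos hk] at hBk
  rw [abs_mul ρ, abs_of_pos hh] at hρh
  rw [Ftilde_sub, abs_le]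
  constructor <;> nlinarith

theorem Ftilde_lipschitz_general (B β₁ β₂ ρ θ σ γ R : ℝ) (hσ : 1 < σ) (hR : 0 < R)
    (D : Set (ℝ × ℝ)) (hDbdd : Bornology.IsBounded D)
    (hDcl : closure D ⊆ Set.Ioi (0:ℝ) ×ˢ Set.Ioi (0:ℝ)) :
    ∃ C > (0:ℝ), ∀ Q : Matrix (Fin 2) (Fin 2) ℝ, Q.IsSymm →
      ∀ z ∈ closure D, ∀ pk ph pk' ph' v v' : ℝ,
        |Ftilde B β₁ β₂ ρ θ σ γ R Q (pk, ph) v z -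
            Ftilde B β₁ β₂ ρ θ σ γ R Q (pk', ph') v' z|
          ≤ C * (|pk - pk'| + |ph - ph'| + |v - v'|) := by
  obtain ⟨r, hr, hzr⟩ := hDbdd.closure.exists_pos_norm_le
  refine ⟨|θ| + (|B| + |ρ| + R * (1 + |ρ|)) * r, by positivity, ?_⟩
  intro Q _ z hz pk ph pk' ph' v v'
  obtain ⟨hk, hh⟩ : 0 < z.1 ∧ 0 < z.2 := hDcl hz
  have hkr : z.1 ≤ r := (le_abs_self _).trans ((norm_fst_le z).trans (hzr z hz))
  have hhr : z.2 ≤ r := (le_abs_self _).trans ((norm_snd_le z).trans (hzr z hz))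
  calc _ ≤ |θ| * |v - v'| + (|B| + R) * z.1 * |pk - pk'|
        + (|ρ| * z.2 + R * z.1 * |ρ|) * |ph - ph'| := abs_Ftilde_sub_le hσ hR hk hh Q _ _ _ _ _ _
    _ ≤ |θ| * |v - v'| + (|B| + R) * r * |pk - pk'| + (|ρ| * r + R * r * |ρ|) * |ph - ph'| := by
        gcongr
    _ ≤ _ := by
        rw [← sub_nonneg]
        ring_nf
        positivity

/-- Lipschitz estimate for `F̃` in `(p, v)`, uniform over symmetric `Q` and over the closure
of an open bounded set `D` with closure contained in `(0,∞)²`. -/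
theorem Ftilde_lipschitz (B β₁ β₂ ρ θ σ γ R : ℝ) (hB : 0 ≤ B) (hβ₁ : 0 < β₁)
    (hβ₂ : 0 < β₂) (hρ₀ : 0 < ρ) (hρ₁ : ρ < 1) (hθ : 0 < θ) (hσ : 1 < σ)
    (hγ₀ : 0 ≤ γ) (hγ₁ : γ < 1) (hR : 0 < R)
    (D : Set (ℝ × ℝ)) (hDopen : IsOpen D) (hDbdd : Bornology.IsBounded D)
    (hDcl : closure D ⊆ Set.Ioi (0:ℝ) ×ˢ Set.Ioi (0:ℝ)) :
    ∃ C > (0:ℝ), ∀ Q : Matrix (Fin 2) (Fin 2) ℝ, Q.IsSymm →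
      ∀ z ∈ closure D, ∀ pk ph pk' ph' v v' : ℝ,
        |Ftilde B β₁ β₂ ρ θ σ γ R Q (pk, ph) v z -
            Ftilde B β₁ β₂ ρ θ σ γ R Q (pk', ph') v' z|
          ≤ C * (|pk - pk'| + |ph - ph'| + |v - v'|) :=
  Ftilde_lipschitz_general B β₁ β₂ ρ θ σ γ R hσ hR D hDbdd hDcl

end HabitModel
end
end

section
/- Let D ⊂ ℝ² be open and bounded with closure contained in (0,∞)². Then there exists a constant C̄ > 0 such that for every α ∈ (0,1), every real symmetric 2×2 matrix Q = (Q_{ij}), every p = (p_k,p_h) ∈ ℝ² and every v ∈ ℝ: ⟨F̃(Q, p, v, ·)⟩^α_D ≤ C̄·(1 + Σ_{i,j=1}^{2}|Q_{ij}| + |p_k| + |p_h| + |v|), where for a function f : D → ℝ one sets ⟨f⟩^α_D := sup over (k,h) ∈ D and δ > 0 of δ^{−α}·( sup_{D ∩ B_δ(k,h)} f − inf_{D ∩ B_δ(k,h)} f ), with B_δ(k,h) the open Euclidean ball of radius δ centered at (k,h). -/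
/-!
On a box `[a,b]²` with `a > 0` containing `D`, the function `F̃(Q,p,v,·)` is Lipschitz with a
constant of the form `A·(1 + Σ|Q_ij| + |p_k| + |p_h| + |v|)`. The polynomial part of `H_max` is a
sum of fixed smooth functions with coefficients linear in the data. The term `G` is glued, along
the curve `q = h^{γ(σ-1)}(Rk)^{-σ}` with `q = p_k - ρ p_h`, from two smooth branches that agree on
it: the value `gFun (R k)` of the constrained maximiser, and the unconstrained maximum, which
factors as `q^{1-1/σ}` times a fixed function of `h`; as `0 ≤ 1 - 1/σ ≤ 1`, both coefficients grow
at most like `1 + |q|`. A function with Lipschitz constant `L` oscillates by at most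
`L·min(2δ, diam D)` on `D ∩ B_δ`, and `δ^{-α}·min(2δ, diam D) ≤ 2 + diam D` for `α ∈ (0,1)`.
-/

open MeasureTheory ProbabilityTheory Real Set Matrix
open scoped ENNReal NNReal

noncomputable section

open Metric

theorem LipschitzOnWith.congr {α β : Type*} [PseudoEMetricSpace α] [PseudoEMetricSpace β]
    {K : ℝ≥0} {f g : α → β} {s : Set α} (hf : LipschitzOnWith K f s) (hfg : EqOn f g s) :
    LipschitzOnWith K g s := fun x hx y hy => by
  simpa only [← hfg hx, ← hfg hy] using hf hx hy

theorem LipschitzOnWith.const_mul_of_nnnorm_le {α : Type*} [PseudoEMetricSpace α] {K a N : ℝ≥0}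
    {f : α → ℝ} {s : Set α} (hf : LipschitzOnWith K f s) {c : ℝ} (hc : ‖c‖₊ ≤ a * N) :
    LipschitzOnWith (a * K * N) (fun x => c * f x) s :=
  ((lipschitzWith_smul c).comp_lipschitzOnWith hf).weaken <| by
    rw [mul_right_comm]; gcongr

theorem LipschitzOnWith.ite_le_of_eq {E F : Type*} [NormedAddCommGroup E] [NormedSpace ℝ E]
    [PseudoMetricSpace F] {K : Set E} (hK : Convex ℝ K) {φ : E → ℝ} {c : ℝ} {f g : E → F}
    {L : ℝ≥0} (hφ : ContinuousOn φ K) (hf : LipschitzOnWith L f K) (hg : LipschitzOnWith L g K)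
    (hfg : ∀ x ∈ K, φ x = c → f x = g x) :
    LipschitzOnWith L (fun x => if c ≤ φ x then f x else g x) K := by
  have cross : ∀ x ∈ K, ∀ y ∈ K, c ≤ φ x → φ y < c → dist (f x) (g y) ≤ L * dist x y := by
    intro x hx y hy hcx hcy
    have hseg : segment ℝ x y ⊆ K := hK.segment_subset hx hy
    obtain ⟨z, hz, hφz⟩ := (convex_segment x y).isPreconnected.intermediate_value
      (right_mem_segment ℝ x y) (left_mem_segment ℝ x y) (hφ.mono hseg) ⟨hcy.le, hcx⟩
    calc dist (f x) (g y) ≤ dist (f x) (f z) + dist (g z) (g y) := by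
          rw [hfg z (hseg hz) hφz]; exact dist_triangle _ _ _
      _ ≤ L * dist x z + L * dist z y :=
          add_le_add (hf.dist_le_mul x hx z (hseg hz)) (hg.dist_le_mul z (hseg hz) y hy)
      _ = L * dist x y := by rw [← mul_add, dist_add_dist_of_mem_segment hz]
  refine LipschitzOnWith.of_dist_le_mul fun x hx y hy => ?_
  by_cases hcx : c ≤ φ x <;> by_cases hcy : c ≤ φ y <;> simp only [hcx, hcy, if_true, if_false]
  · exact hf.dist_le_mul x hx y hy
  · exact cross x hx y hy hcx (not_le.mp hcy)
  · rw [dist_comm, dist_comm x]; exact cross y hy x hx hcy (not_le.mp hcx)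
  · exact hg.dist_le_mul x hx y hy

theorem LipschitzOnWith.sSup_image_sub_sInf_image_le {α : Type*} [PseudoMetricSpace α]
    {K : ℝ≥0} {f : α → ℝ} {s : Set α} (hf : LipschitzOnWith K f s) (hs : Bornology.IsBounded s) :
    sSup (f '' s) - sInf (f '' s) ≤ K * diam s := by
  have hdist : ∀ a ∈ f '' s, ∀ b ∈ f '' s, dist a b ≤ K * diam s := by
    rintro _ ⟨x, hx, rfl⟩ _ ⟨y, hy, rfl⟩
    exact (hf.dist_le_mul x hx y hy).trans (by gcongr; exact dist_le_diam_of_mem hs hx hy)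
  rw [← Real.diam_eq (isBounded_iff.2 ⟨_, hdist⟩)]
  exact diam_le_of_forall_dist_le (by positivity) hdist

theorem Real.abs_rpow_le_one_add_abs (x : ℝ) {e : ℝ} (he₀ : 0 ≤ e) (he₁ : e ≤ 1) :
    |x ^ e| ≤ 1 + |x| := by
  refine (abs_rpow_le_abs_rpow x e).trans ?_
  rcases le_or_gt |x| 1 with hx | hx
  · linarith [rpow_le_one (abs_nonneg x) hx he₀, abs_nonneg x]
  · have := rpow_le_rpow_of_exponent_le hx.le he₁
    rw [rpow_one] at this
    linarith

theorem Real.rpow_neg_mul_le_two_add {δ α x d : ℝ} (hδ : 0 < δ) (hα₀ : 0 ≤ α) (hα₁ : α ≤ 1)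
    (hx₀ : 0 ≤ x) (hxδ : x ≤ 2 * δ) (hxd : x ≤ d) : δ ^ (-α) * x ≤ 2 + d := by
  rcases le_or_gt δ 1 with hδ₁ | hδ₁
  · calc δ ^ (-α) * x ≤ δ ^ (-α) * (2 * δ) := by gcongr
      _ = 2 * δ ^ (1 - α) := by
          rw [sub_eq_neg_add, rpow_add_one hδ.ne']; ring
      _ ≤ 2 * 1 := by gcongr; exact rpow_le_one hδ.le hδ₁ (by linarith)
      _ ≤ 2 + d := by linarith
  · calc δ ^ (-α) * x ≤ 1 * x := by
          gcongr; exact rpow_le_one_of_one_le_of_nonpos hδ₁.le (by linarith)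
      _ ≤ 2 + d := by linarith

theorem Prod.dist_lt_of_sq_add_sq_lt {w z : ℝ × ℝ} {δ : ℝ} (hδ : 0 ≤ δ)
    (h : (w.1 - z.1) ^ 2 + (w.2 - z.2) ^ 2 < δ ^ 2) : dist w z < δ := by
  rw [Prod.dist_eq, Real.dist_eq, Real.dist_eq]
  exact max_lt (abs_lt_of_sq_lt_sq (by nlinarith) hδ) (abs_lt_of_sq_lt_sq (by nlinarith) hδ)

theorem rpow_neg_mul_oscillation_le {f : ℝ × ℝ → ℝ} {L : ℝ≥0} {D : Set (ℝ × ℝ)}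
    (hf : LipschitzOnWith L f D) (hD : Bornology.IsBounded D) (z : ℝ × ℝ) {α δ : ℝ}
    (hα₀ : 0 ≤ α) (hα₁ : α ≤ 1) (hδ : 0 < δ) :
    δ ^ (-α) *
        (sSup (f '' (D ∩ {w | (w.1 - z.1) ^ 2 + (w.2 - z.2) ^ 2 < δ ^ 2})) -
          sInf (f '' (D ∩ {w | (w.1 - z.1) ^ 2 + (w.2 - z.2) ^ 2 < δ ^ 2})))
      ≤ L * (2 + diam D) := by
  set S := D ∩ {w : ℝ × ℝ | (w.1 - z.1) ^ 2 + (w.2 - z.2) ^ 2 < δ ^ 2}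
  have hSD : S ⊆ D := inter_subset_left
  have hSδ : diam S ≤ 2 * δ := diam_le_of_subset_closedBall hδ.le fun w hw =>
    (Prod.dist_lt_of_sq_add_sq_lt hδ.le hw.2).le
  calc δ ^ (-α) * (sSup (f '' S) - sInf (f '' S)) ≤ δ ^ (-α) * (L * diam S) := by
        gcongr; exact LipschitzOnWith.sSup_image_sub_sInf_image_le (hf.mono hSD) (hD.subset hSD)
    _ = L * (δ ^ (-α) * diam S) := by ring
    _ ≤ L * (2 + diam D) := by
        gcongr
        exact rpow_neg_mul_le_two_add hδ hα₀ hα₁ diam_nonneg hSδ (diam_mono hSD hD)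

theorem IsCompact.exists_subset_Icc_prod_Icc {D : Set (ℝ × ℝ)} (hD : IsCompact D)
    (hpos : D ⊆ Ioi 0 ×ˢ Ioi 0) : ∃ a > 0, ∃ b, D ⊆ Icc a b ×ˢ Icc a b := by
  obtain ⟨a, ha, hmin⟩ := hD.exists_forall_le' (continuous_fst.min continuous_snd).continuousOn
    fun w hw => lt_min (hpos hw).1 (hpos hw).2
  obtain ⟨b, hmax⟩ := hD.bddAbove_image (continuous_fst.max continuous_snd).continuousOn
  refine ⟨a, ha, b, fun w hw => ?_⟩
  have hlo := hmin w hw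
  have hhi := hmax (mem_image_of_mem _ hw)
  simp only [le_min_iff, max_le_iff] at hlo hhi
  exact ⟨⟨hlo.1, hhi.1⟩, hlo.2, hhi.2⟩

namespace HabitModel

/-- `sup_{c > 0} gFun ρ σ γ c h pk ph`, attained at `c = (h^{γ(σ-1)}/q)^{1/σ}` when
`q = pk - ρ·ph > 0`, with `h` and `q` split into separate factors. -/
def gFunSup (ρ σ γ : ℝ) (h pk ph : ℝ) : ℝ :=
  -(1 + (σ - 1)⁻¹) * (pk - ρ * ph) ^ (1 - 1 / σ) * h ^ (γ * (1 - 1 / σ))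

variable {ρ σ γ R : ℝ}

theorem gFun_eq_gFunSup_of_eq {c h pk ph : ℝ} (hσ : σ ≠ 0) (hc : 0 < c) (hh : 0 < h)
    (hq : pk - ρ * ph = h ^ (γ * (σ - 1)) * c ^ (-σ)) :
    gFun ρ σ γ c h pk ph = gFunSup ρ σ γ h pk ph := by
  set q := pk - ρ * ph
  -- With `t = h^γ / c` on the switching curve, `c·q = t^(σ-1)` and `q·h^γ = t^σ`, so both sides
  -- equal `-(1 + (σ-1)⁻¹)·t^(σ-1)`.
  set t := h ^ γ / c with ht_def
  have ht : 0 < t := div_pos (rpow_pos_of_pos hh γ) hc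
  have hhγ : h ^ γ = t * c := by rw [ht_def]; field_simp
  have hcq : c * q = t ^ (σ - 1) := by
    rw [hq, rpow_mul hh.le, hhγ, mul_rpow ht.le hc.le]
    have : c * c ^ (σ - 1) * c ^ (-σ) = 1 := by
      rw [mul_assoc, ← rpow_add hc, show σ - 1 + -σ = (-1 : ℝ) by ring, rpow_neg_one,
        mul_inv_cancel₀ hc.ne']
    linear_combination t ^ (σ - 1) * this
  have hqh : q ^ (1 - 1 / σ) * h ^ (γ * (1 - 1 / σ)) = t ^ (σ - 1) := by
    have hqt : q * h ^ γ = t ^ σ := by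
      rw [hhγ, mul_left_comm, mul_comm q, hcq, ← rpow_one_add' ht.le (by simp [hσ]), add_sub_cancel]
    have hq0 : 0 ≤ q := by rw [hq]; positivity
    rw [rpow_mul hh.le, ← mul_rpow hq0 (rpow_nonneg hh.le _), hqt, ← rpow_mul ht.le]
    congr 1; field_simp
  rw [gFun, gFunSup, mul_assoc _ (q ^ _), hqh, neg_mul, hcq]
  ring

theorem GFun_eq_ite {R k h pk ph : ℝ} (hR : 0 < R) (hk : 0 < k) (hh : 0 < h) :
    GFun ρ σ γ R k h pk ph = if pk - ρ * ph ≤ h ^ (γ * (σ - 1)) * (R * k) ^ (-σ) then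
      gFun ρ σ γ (R * k) h pk ph else gFunSup ρ σ γ h pk ph := by
  rw [GFun, gFun, gFunSup]
  split_ifs with hq
  · rfl
  · have hq0 : 0 < pk - ρ * ph :=
      (by positivity : 0 < h ^ (γ * (σ - 1)) * (R * k) ^ (-σ)).trans (not_le.mp hq)
    rw [mul_rpow (rpow_nonneg hh.le _) hq0.le, ← rpow_mul hh.le]
    ring

theorem exists_lipschitzOnWith_gFun_mul (hR : 0 < R) {K : Set (ℝ × ℝ)} (hKconv : Convex ℝ K)
    (hKcomp : IsCompact K) (hKpos : K ⊆ Ioi 0 ×ˢ Ioi 0) :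
    ∃ M : ℝ≥0, ∀ pk ph : ℝ, LipschitzOnWith (M * (1 + ‖pk - ρ * ph‖₊))
      (fun w => gFun ρ σ γ (R * w.1) w.2 pk ph) K := by
  obtain ⟨K₁, hK₁⟩ : ∃ K₁, LipschitzOnWith K₁
      (fun w : ℝ × ℝ => (σ - 1)⁻¹ * (w.2 ^ γ / (R * w.1)) ^ (σ - 1)) K := by
    have hpos : ∀ w ∈ K, 0 < R * w.1 ∧ 0 < w.2 := fun w hw =>
      ⟨mul_pos hR (hKpos hw).1, (hKpos hw).2⟩
    refine ContDiffOn.exists_lipschitzOnWith ?_ one_ne_zero hKconv hKcomp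
    refine contDiffOn_const.mul (ContDiffOn.rpow_const_of_ne ?_ fun w hw => ?_)
    · refine ContDiffOn.div ?_ (by fun_prop) fun w hw => (hpos w hw).1.ne'
      exact ContDiffOn.rpow_const_of_ne (by fun_prop) fun w hw => (hpos w hw).2.ne'
    · exact (div_pos (rpow_pos_of_pos (hpos w hw).2 _) (hpos w hw).1).ne'
  refine ⟨‖R‖₊ + K₁, fun pk ph => ?_⟩
  set q := pk - ρ * ph
  have hlin := (LipschitzWith.prod_fst.lipschitzOnWith (s := K)).const_mul_of_nnnorm_le
    (c := -(R * q)) (a := ‖R‖₊) (N := ‖q‖₊) (by rw [nnnorm_neg, nnnorm_mul])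
  refine ((hlin.sub hK₁).congr fun w _ => by simp only [gFun]; ring).weaken ?_
  rw [mul_one, add_mul]
  exact add_le_add (by gcongr; exact le_add_self) (le_mul_of_one_le_right' le_self_add)

theorem exists_lipschitzOnWith_gFunSup (hσ : 1 ≤ σ) {K : Set (ℝ × ℝ)} (hKconv : Convex ℝ K)
    (hKcomp : IsCompact K) (hKpos : K ⊆ Ioi 0 ×ˢ Ioi 0) :
    ∃ M : ℝ≥0, ∀ pk ph : ℝ, LipschitzOnWith (M * (1 + ‖pk - ρ * ph‖₊))
      (fun w => gFunSup ρ σ γ w.2 pk ph) K := by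
  obtain ⟨K₂, hK₂⟩ : ∃ K₂, LipschitzOnWith K₂ (fun w : ℝ × ℝ => w.2 ^ (γ * (1 - 1 / σ))) K :=
    (ContDiffOn.rpow_const_of_ne (by fun_prop) fun w hw => (hKpos hw).2.ne').exists_lipschitzOnWith
      one_ne_zero hKconv hKcomp
  have he₀ : 0 ≤ 1 - 1 / σ := by
    rw [sub_nonneg, div_le_one (by linarith)]; exact hσ
  have he₁ : 1 - 1 / σ ≤ 1 := by
    have : 0 < 1 / σ := by positivity
    linarith
  refine ⟨‖1 + (σ - 1)⁻¹‖₊ * K₂, fun pk ph => ?_⟩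
  set q := pk - ρ * ph
  have hq : ‖-(1 + (σ - 1)⁻¹) * q ^ (1 - 1 / σ)‖₊ ≤ ‖1 + (σ - 1)⁻¹‖₊ * (1 + ‖q‖₊) := by
    rw [nnnorm_mul, nnnorm_neg]
    gcongr
    rw [← NNReal.coe_le_coe]; push_cast
    exact abs_rpow_le_one_add_abs q he₀ he₁
  exact (hK₂.const_mul_of_nnnorm_le hq).congr fun w _ => by simp only [gFunSup]; ring

theorem exists_lipschitzOnWith_GFun (hσ : 1 < σ) (hR : 0 < R) {K : Set (ℝ × ℝ)}
    (hKconv : Convex ℝ K) (hKcomp : IsCompact K) (hKpos : K ⊆ Ioi 0 ×ˢ Ioi 0) :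
    ∃ M : ℝ≥0, ∀ pk ph : ℝ,
      LipschitzOnWith (M * (1 + ‖pk - ρ * ph‖₊)) (fun w => GFun ρ σ γ R w.1 w.2 pk ph) K := by
  have hpos : ∀ w ∈ K, 0 < w.1 ∧ 0 < w.2 := fun w hw => hKpos hw
  obtain ⟨M₁, hM₁⟩ := exists_lipschitzOnWith_gFun_mul (ρ := ρ) (σ := σ) (γ := γ) hR hKconv
    hKcomp hKpos
  obtain ⟨M₂, hM₂⟩ := exists_lipschitzOnWith_gFunSup (ρ := ρ) (γ := γ) hσ.le hKconv hKcomp hKpos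
  have hthreshold : ContinuousOn (fun w : ℝ × ℝ => w.2 ^ (γ * (σ - 1)) * (R * w.1) ^ (-σ)) K :=
    (ContinuousOn.rpow_const (by fun_prop) fun w hw => Or.inl (hpos w hw).2.ne').mul
      (ContinuousOn.rpow_const (by fun_prop) fun w hw => Or.inl (mul_pos hR (hpos w hw).1).ne')
  refine ⟨M₁ + M₂, fun pk ph => ?_⟩
  set q := pk - ρ * ph
  have hcorner : LipschitzOnWith ((M₁ + M₂) * (1 + ‖q‖₊))
      (fun w => gFun ρ σ γ (R * w.1) w.2 pk ph) K :=
    (hM₁ pk ph).weaken (by gcongr; exact le_self_add)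
  have hinterior : LipschitzOnWith ((M₁ + M₂) * (1 + ‖q‖₊)) (fun w => gFunSup ρ σ γ w.2 pk ph) K :=
    (hM₂ pk ph).weaken (by gcongr; exact le_add_self)
  have hglued := hcorner.ite_le_of_eq hKconv hthreshold hinterior (c := q) fun w hw hq =>
    gFun_eq_gFunSup_of_eq (by linarith) (mul_pos hR (hpos w hw).1) (hpos w hw).2 hq.symm
  exact hglued.congr fun w hw => (GFun_eq_ite hR (hpos w hw).1 (hpos w hw).2).symm

def weight (Q : Matrix (Fin 2) (Fin 2) ℝ) (p : ℝ × ℝ) (v : ℝ) : ℝ≥0 :=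
  1 + (‖Q 0 0‖₊ + ‖Q 0 1‖₊ + ‖Q 1 0‖₊ + ‖Q 1 1‖₊) + ‖p.1‖₊ + ‖p.2‖₊ + ‖v‖₊

theorem coe_weight (Q : Matrix (Fin 2) (Fin 2) ℝ) (p : ℝ × ℝ) (v : ℝ) :
    (weight Q p v : ℝ) = 1 + (|Q 0 0| + |Q 0 1| + |Q 1 0| + |Q 1 1|) + |p.1| + |p.2| + |v| := by
  simp [weight]

theorem exists_lipschitzOnWith_Ftilde (B β₁ β₂ θ : ℝ) (hσ : 1 < σ) (hR : 0 < R)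
    {K : Set (ℝ × ℝ)} (hKconv : Convex ℝ K) (hKcomp : IsCompact K)
    (hKpos : K ⊆ Ioi 0 ×ˢ Ioi 0) :
    ∃ A : ℝ≥0, ∀ Q p v,
      LipschitzOnWith (A * weight Q p v) (Ftilde B β₁ β₂ ρ θ σ γ R Q p v) K := by
  obtain ⟨M, hM⟩ := exists_lipschitzOnWith_GFun (ρ := ρ) (γ := γ) hσ hR hKconv hKcomp hKpos
  obtain ⟨K₁, hK₁⟩ : ∃ K₁, LipschitzOnWith K₁ (fun w : ℝ × ℝ => w.1 ^ 2) K :=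
    (contDiff_fst.pow 2).contDiffOn.exists_lipschitzOnWith one_ne_zero hKconv hKcomp
  obtain ⟨K₂, hK₂⟩ : ∃ K₂, LipschitzOnWith K₂ (fun w : ℝ × ℝ => w.2 ^ 2) K :=
    (contDiff_snd.pow 2).contDiffOn.exists_lipschitzOnWith one_ne_zero hKconv hKcomp
  refine ⟨‖B‖₊ * 1 + ‖ρ‖₊ * 1 + ‖β₁ ^ 2 / 2‖₊ * K₁ + ‖β₂ ^ 2 / 2‖₊ * K₂ + M * (1 + ‖ρ‖₊),
    fun Q p v => ?_⟩
  set N := weight Q p v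
  have hN : 1 + ‖p.1‖₊ ≤ N ∧ ‖p.2‖₊ ≤ N ∧ ‖Q 0 0‖₊ ≤ N ∧ ‖Q 1 1‖₊ ≤ N := by
    simp only [N, ← NNReal.coe_le_coe, coe_weight]
    push_cast
    simp only [Real.norm_eq_abs]
    have := abs_nonneg (Q 0 0); have := abs_nonneg (Q 0 1); have := abs_nonneg (Q 1 0)
    have := abs_nonneg (Q 1 1); have := abs_nonneg p.1; have := abs_nonneg p.2
    have := abs_nonneg v
    refine ⟨?_, ?_, ?_, ?_⟩ <;> linarith
  have hfst := LipschitzWith.prod_fst.lipschitzOnWith (s := K)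
  have hsnd := LipschitzWith.prod_snd.lipschitzOnWith (s := K)
  have h₁ := hfst.const_mul_of_nnnorm_le (c := B * p.1) (a := ‖B‖₊) (N := N) (by
    rw [nnnorm_mul]; gcongr; exact le_add_self.trans hN.1)
  have h₂ := hsnd.const_mul_of_nnnorm_le (c := -(ρ * p.2)) (a := ‖ρ‖₊) (N := N) (by
    rw [nnnorm_neg, nnnorm_mul]; gcongr; exact hN.2.1)
  have h₃ := hK₁.const_mul_of_nnnorm_le (c := β₁ ^ 2 / 2 * Q 0 0) (a := ‖β₁ ^ 2 / 2‖₊) (N := N) (by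
    rw [nnnorm_mul]; gcongr; exact hN.2.2.1)
  have h₄ := hK₂.const_mul_of_nnnorm_le (c := β₂ ^ 2 / 2 * Q 1 1) (a := ‖β₂ ^ 2 / 2‖₊) (N := N) (by
    rw [nnnorm_mul]; gcongr; exact hN.2.2.2)
  have h₅ : LipschitzOnWith (M * (1 + ‖ρ‖₊) * N) (fun w => GFun ρ σ γ R w.1 w.2 p.1 p.2) K := by
    refine (hM p.1 p.2).weaken ?_
    rw [mul_assoc]
    gcongr
    calc 1 + ‖p.1 - ρ * p.2‖₊ ≤ 1 + ‖p.1‖₊ + ‖ρ‖₊ * ‖p.2‖₊ := by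
          rw [add_assoc, ← nnnorm_mul]; gcongr; exact nnnorm_sub_le _ _
      _ ≤ N + ‖ρ‖₊ * N := by gcongr; exacts [hN.1, hN.2.1]
      _ = (1 + ‖ρ‖₊) * N := by ring
  have hsum := (((((LipschitzWith.const (-θ * v)).lipschitzOnWith (s := K)).add h₁).add h₂).add
    h₃).add h₄ |>.add h₅
  refine (hsum.congr fun w _ => ?_).weaken (le_of_eq (by ring))
  simp only [Ftilde, Hmax]
  ring

theorem Ftilde_holder_general (B β₁ β₂ ρ θ σ γ R : ℝ) (hσ : 1 < σ) (hR : 0 < R)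
    (D : Set (ℝ × ℝ)) (hDbdd : Bornology.IsBounded D)
    (hDcl : closure D ⊆ Set.Ioi (0:ℝ) ×ˢ Set.Ioi (0:ℝ)) :
    ∃ C > (0:ℝ), ∀ α ∈ Set.Ioo (0:ℝ) 1, ∀ Q : Matrix (Fin 2) (Fin 2) ℝ, Q.IsSymm →
      ∀ p : ℝ × ℝ, ∀ v : ℝ, ∀ z ∈ D, ∀ δ : ℝ, 0 < δ →
        δ ^ (-α) *
          (sSup ((fun w => Ftilde B β₁ β₂ ρ θ σ γ R Q p v w) ''
              (D ∩ {w : ℝ × ℝ | (w.1 - z.1) ^ 2 + (w.2 - z.2) ^ 2 < δ ^ 2})) -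
            sInf ((fun w => Ftilde B β₁ β₂ ρ θ σ γ R Q p v w) ''
              (D ∩ {w : ℝ × ℝ | (w.1 - z.1) ^ 2 + (w.2 - z.2) ^ 2 < δ ^ 2})))
          ≤ C * (1 + (|Q 0 0| + |Q 0 1| + |Q 1 0| + |Q 1 1|) + |p.1| + |p.2| + |v|) := by
  obtain ⟨a, ha, b, hDab⟩ := hDbdd.isCompact_closure.exists_subset_Icc_prod_Icc hDcl
  obtain ⟨A, hA⟩ := exists_lipschitzOnWith_Ftilde (ρ := ρ) (γ := γ) B β₁ β₂ θ hσ hR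
    ((convex_Icc a b).prod (convex_Icc a b)) (isCompact_Icc.prod isCompact_Icc)
    (prod_mono (fun x hx => ha.trans_le hx.1) fun x hx => ha.trans_le hx.1)
  refine ⟨(A + 1) * (2 + diam D), by positivity, fun α hα Q _ p v z _ δ hδ => ?_⟩
  have hF := (hA Q p v).mono (subset_closure.trans hDab)
  rw [← coe_weight]
  calc _ ≤ ((A * weight Q p v : ℝ≥0) : ℝ) * (2 + diam D) :=
        rpow_neg_mul_oscillation_le hF hDbdd z hα.1.le hα.2.le hδ
    _ ≤ (A + 1) * (2 + diam D) * weight Q p v := by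
        push_cast
        rw [mul_right_comm]
        gcongr
        linarith

/-- Hölder-seminorm estimate for `F̃(Q,p,v,·)` on `D`: for every `α ∈ (0,1)`, every center
`(k,h) ∈ D` and every radius `δ > 0`,
`δ^{-α}·(sup_{D ∩ B_δ} F̃ - inf_{D ∩ B_δ} F̃) ≤ C̄·(1 + Σ|Q_{ij}| + |p_k| + |p_h| + |v|)`,
where `B_δ` is the open Euclidean ball. -/
theorem Ftilde_holder (B β₁ β₂ ρ θ σ γ R : ℝ) (hB : 0 ≤ B) (hβ₁ : 0 < β₁)
    (hβ₂ : 0 < β₂) (hρ₀ : 0 < ρ) (hρ₁ : ρ < 1) (hθ : 0 < θ) (hσ : 1 < σ)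
    (hγ₀ : 0 ≤ γ) (hγ₁ : γ < 1) (hR : 0 < R)
    (D : Set (ℝ × ℝ)) (hDopen : IsOpen D) (hDbdd : Bornology.IsBounded D)
    (hDcl : closure D ⊆ Set.Ioi (0:ℝ) ×ˢ Set.Ioi (0:ℝ)) :
    ∃ C > (0:ℝ), ∀ α ∈ Set.Ioo (0:ℝ) 1, ∀ Q : Matrix (Fin 2) (Fin 2) ℝ, Q.IsSymm →
      ∀ p : ℝ × ℝ, ∀ v : ℝ, ∀ z ∈ D, ∀ δ : ℝ, 0 < δ →
        δ ^ (-α) *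
          (sSup ((fun w => Ftilde B β₁ β₂ ρ θ σ γ R Q p v w) ''
              (D ∩ {w : ℝ × ℝ | (w.1 - z.1) ^ 2 + (w.2 - z.2) ^ 2 < δ ^ 2})) -
            sInf ((fun w => Ftilde B β₁ β₂ ρ θ σ γ R Q p v w) ''
              (D ∩ {w : ℝ × ℝ | (w.1 - z.1) ^ 2 + (w.2 - z.2) ^ 2 < δ ^ 2})))
          ≤ C * (1 + (|Q 0 0| + |Q 0 1| + |Q 1 0| + |Q 1 1|) + |p.1| + |p.2| + |v|) :=
  Ftilde_holder_general B β₁ β₂ ρ θ σ γ R hσ hR D hDbdd hDcl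

end HabitModel
end
end
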